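/- Let K, K₀ ∈ 𝒦^{n*} and let r = d_H(K,K₀) be their Hausdorff distance. Then δ^l(K) ≤ (1+r)^{2n}·δ^l(K₀). -/

import Mathlib

open Metric Set Pointwise MeasureTheory Filter ENNReal

/-!
If `d_H(K, K₀) ≤ r` and both bodies contain the unit ball, then `K ⊆ K₀ + r Bⁿ ⊆ (1 + r) K₀` and
symmetrically `K₀ ⊆ (1 + r) K`. Given a lattice packing of `K` with lattice `Λ`, the second
inclusion makes `(1 + r) Λ` a lattice packing of `K₀`, whose covolume is `(1 + r)ⁿ det Λ`, while
the first inclusion gives `vol K ≤ (1 + r)ⁿ vol K₀`. Together these cost the factor `(1 + r)^{2n}`.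
-/

/-- The lattice packing density `δ^l(K)`:
`sup {vol(K)/det Λ : Λ a lattice in ℝⁿ such that the translates K + λ (λ ∈ Λ) have pairwise
disjoint interiors}`, where a lattice is the set of integer linear combinations of a basis of
`ℝⁿ`, and its covolume `det Λ` is the volume of a fundamental parallelepiped. -/
noncomputable def deltaL (n : ℕ) (K : Set (EuclideanSpace ℝ (Fin n))) : ℝ≥0∞ :=
  ⨆ (b : Module.Basis (Fin n) ℝ (EuclideanSpace ℝ (Fin n)))
    (_ : ((Submodule.span ℤ (Set.range ⇑b) : Submodule ℤ (EuclideanSpace ℝ (Fin n))) :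
        Set (EuclideanSpace ℝ (Fin n))).Pairwise
        fun v w => interior (v +ᵥ K) ∩ interior (w +ᵥ K) = ∅),
    volume K / volume (ZSpan.fundamentalDomain b)

theorem subset_cthickening_of_hausdorffDist_le {α : Type*} [PseudoMetricSpace α] {A B : Set α}
    {r : ℝ} (hfin : hausdorffEDist A B ≠ ⊤) (h : hausdorffDist A B ≤ r) :
    A ⊆ cthickening r B := by
  intro x hx
  rw [mem_cthickening_iff]
  calc infEDist x B ≤ hausdorffEDist A B := infEDist_le_hausdorffEDist_of_mem hx
    _ = ENNReal.ofReal (hausdorffDist A B) := (ENNReal.ofReal_toReal hfin).symm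
    _ ≤ ENNReal.ofReal r := ENNReal.ofReal_le_ofReal h

section Convex

variable {E : Type*} [NormedAddCommGroup E] [NormedSpace ℝ E]

theorem Convex.cthickening_subset_one_add_smul {B : Set E} {r : ℝ} (hBconv : Convex ℝ B)
    (hBcomp : IsCompact B) (hB : closedBall (0 : E) 1 ⊆ B) (hr : 0 ≤ r) :
    Metric.cthickening r B ⊆ (1 + r) • B := by
  rw [← hBcomp.add_closedBall_zero hr, hBconv.add_smul zero_le_one hr, one_smul,
    ← smul_unitClosedBall_of_nonneg hr]
  exact add_subset_add_left (smul_set_mono hB)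

theorem Convex.subset_one_add_smul_of_hausdorffDist_le {A B : Set E} {r : ℝ}
    (hBconv : Convex ℝ B) (hBcomp : IsCompact B) (hB : closedBall (0 : E) 1 ⊆ B)
    (hfin : hausdorffEDist A B ≠ ⊤) (h : hausdorffDist A B ≤ r) : A ⊆ (1 + r) • B :=
  (subset_cthickening_of_hausdorffDist_le hfin h).trans
    (hBconv.cthickening_subset_one_add_smul hBcomp hB (hausdorffDist_nonneg.trans h))

end Convex

def IsTranslativePacking {E : Type*} [Add E] [TopologicalSpace E] (L K : Set E) : Prop :=
  L.Pairwise fun v w => interior (v +ᵥ K) ∩ interior (w +ᵥ K) = ∅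

theorem IsTranslativePacking.mono {E : Type*} [Add E] [TopologicalSpace E] {L K K' : Set E}
    (h : IsTranslativePacking L K) (hK' : K' ⊆ K) : IsTranslativePacking L K' :=
  fun _ hv _ hw hvw => subset_empty_iff.mp <| (h hv hw hvw).subst <|
    inter_subset_inter (interior_mono (vadd_set_mono hK')) (interior_mono (vadd_set_mono hK'))

theorem IsTranslativePacking.smul {E : Type*} [AddCommGroup E] [Module ℝ E] [TopologicalSpace E]
    [ContinuousConstSMul ℝ E] {L K : Set E} (h : IsTranslativePacking L K) {c : ℝ}
    (hc : c ≠ 0) : IsTranslativePacking (c • L) (c • K) := by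
  rintro _ ⟨v, hv, rfl⟩ _ ⟨w, hw, rfl⟩ hvw
  have hvw' : v ≠ w := fun heq => hvw (heq ▸ rfl)
  have hsmul (u : E) : c • u +ᵥ c • K = c • (u +ᵥ K) := (image_comm fun _ => smul_add c u _).symm
  rw [hsmul, hsmul, interior_smul₀ hc, interior_smul₀ hc, ← smul_set_inter₀ hc, h hv hw hvw',
    smul_set_empty]

theorem span_int_range_map_smulOfNeZero {ι E : Type*} [AddCommGroup E] [Module ℝ E]
    (b : Module.Basis ι ℝ E) {c : ℝ} (hc : c ≠ 0) :
    (Submodule.span ℤ (range (b.map (LinearEquiv.smulOfNeZero ℝ E c hc))) : Set E) =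
      c • (Submodule.span ℤ (range b) : Set E) := by
  have hrange : range (b.map (LinearEquiv.smulOfNeZero ℝ E c hc)) =
      (DistribSMul.toLinearMap ℤ E c) '' range b := by
    rw [b.coe_map, range_comp]
    rfl
  rw [hrange, ← Submodule.map_span, Submodule.map_coe]
  rfl

theorem ZSpan.fundamentalDomain_map_smulOfNeZero {ι E : Type*} [Finite ι] [NormedAddCommGroup E]
    [NormedSpace ℝ E] (b : Module.Basis ι ℝ E) {c : ℝ} (hc : c ≠ 0) :
    ZSpan.fundamentalDomain (b.map (LinearEquiv.smulOfNeZero ℝ E c hc)) =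
      c • ZSpan.fundamentalDomain b :=
  (ZSpan.map_fundamentalDomain b _).symm

theorem le_deltaL {n : ℕ} {K : Set (EuclideanSpace ℝ (Fin n))}
    (b : Module.Basis (Fin n) ℝ (EuclideanSpace ℝ (Fin n)))
    (hb : IsTranslativePacking (Submodule.span ℤ (range b) : Set (EuclideanSpace ℝ (Fin n))) K) :
    volume K / volume (ZSpan.fundamentalDomain b) ≤ deltaL n K := by
  unfold deltaL
  exact le_iSup₂_of_le b hb le_rfl

theorem deltaL_le_of_subset_smul {n : ℕ} {K K₀ : Set (EuclideanSpace ℝ (Fin n))} {c : ℝ}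
    (hc : 0 < c) (hKK₀ : K ⊆ c • K₀) (hK₀K : K₀ ⊆ c • K) :
    deltaL n K ≤ ENNReal.ofReal (c ^ (2 * n)) * deltaL n K₀ := by
  refine iSup₂_le fun b hb => ?_
  set b' := b.map (LinearEquiv.smulOfNeZero ℝ _ c hc.ne')
  set a := ENNReal.ofReal (c ^ n)
  have ha0 : a ≠ 0 := (ENNReal.ofReal_pos.mpr (by positivity)).ne'
  have hvol_smul : ∀ s : Set (EuclideanSpace ℝ (Fin n)), volume (c • s) = a * volume s := by
    intro s
    rw [Measure.addHaar_smul, finrank_euclideanSpace_fin, abs_of_pos (by positivity)]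
  have hb' : IsTranslativePacking (Submodule.span ℤ (range b') : Set _) K₀ := by
    rw [span_int_range_map_smulOfNeZero]
    exact (IsTranslativePacking.smul hb hc.ne').mono hK₀K
  have hFD : volume (ZSpan.fundamentalDomain b') = a * volume (ZSpan.fundamentalDomain b) := by
    rw [ZSpan.fundamentalDomain_map_smulOfNeZero, hvol_smul]
  calc volume K / volume (ZSpan.fundamentalDomain b)
      ≤ a * volume K₀ / volume (ZSpan.fundamentalDomain b) := by
        gcongr
        exact (measure_mono hKK₀).trans_eq (hvol_smul K₀)
    _ = a * a * (volume K₀ / volume (ZSpan.fundamentalDomain b')) := by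
        rw [hFD, mul_assoc, ← mul_div_assoc, ENNReal.mul_div_mul_left _ _ ha0 ofReal_ne_top,
          mul_div_assoc]
    _ ≤ ENNReal.ofReal (c ^ (2 * n)) * deltaL n K₀ := by
        rw [← ENNReal.ofReal_mul (by positivity), ← pow_add, ← two_mul]
        exact mul_le_mul_right (le_deltaL b' hb') _

theorem stmt_5_general (n : ℕ) (K K₀ : Set (EuclideanSpace ℝ (Fin n)))
    (hKcomp : IsCompact K) (hKconv : Convex ℝ K)
    (hK₀comp : IsCompact K₀) (hK₀conv : Convex ℝ K₀)
    (hKl : closedBall (0 : EuclideanSpace ℝ (Fin n)) 1 ⊆ K)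
    (hK₀l : closedBall (0 : EuclideanSpace ℝ (Fin n)) 1 ⊆ K₀)
    (r : ℝ) (hr : r = hausdorffDist K K₀) :
    deltaL n K ≤ ENNReal.ofReal ((1 + r) ^ (2 * n)) * deltaL n K₀ := by
  have hfin : hausdorffEDist K K₀ ≠ ⊤ :=
    hausdorffEDist_ne_top_of_nonempty_of_bounded ⟨0, hKl (mem_closedBall_self zero_le_one)⟩
      ⟨0, hK₀l (mem_closedBall_self zero_le_one)⟩ hKcomp.isBounded hK₀comp.isBounded
  have hr0 : 0 ≤ r := hr ▸ hausdorffDist_nonneg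
  exact deltaL_le_of_subset_smul (by positivity)
    (hK₀conv.subset_one_add_smul_of_hausdorffDist_le hK₀comp hK₀l hfin hr.ge)
    (hKconv.subset_one_add_smul_of_hausdorffDist_le hKcomp hKl
      (hausdorffEDist_comm.trans_ne hfin) (hausdorffDist_comm.trans_le hr.ge))

/-- Let `K, K₀ ∈ 𝒦^{n*}` and let `r = d_H(K, K₀)` be their Hausdorff distance.
Then `δ^l(K) ≤ (1+r)^{2n} · δ^l(K₀)`. -/
theorem stmt_5 (n : ℕ) (hn : 1 ≤ n) (K K₀ : Set (EuclideanSpace ℝ (Fin n)))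
    (hKcomp : IsCompact K) (hKconv : Convex ℝ K) (hKint : (interior K).Nonempty)
    (hK₀comp : IsCompact K₀) (hK₀conv : Convex ℝ K₀) (hK₀int : (interior K₀).Nonempty)
    (hKl : closedBall (0 : EuclideanSpace ℝ (Fin n)) 1 ⊆ K) (hKu : K ⊆ closedBall 0 n)
    (hK₀l : closedBall (0 : EuclideanSpace ℝ (Fin n)) 1 ⊆ K₀) (hK₀u : K₀ ⊆ closedBall 0 n)
    (r : ℝ) (hr : r = hausdorffDist K K₀) :
    deltaL n K ≤ ENNReal.ofReal ((1 + r) ^ (2 * n)) * deltaL n K₀ :=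
  stmt_5_general n K K₀ hKcomp hKconv hK₀comp hK₀conv hKl hK₀l r hr
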